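/- Arzelà's quasi-uniform convergence theorem (finite subcover form) follows from Dini-type data: if a net f_d : D → C([0,1], ℝ) of continuous functions converges pointwise to a continuous f : [0,1] → ℝ, then the convergence is quasi-uniform: for every ε > 0 and every d ∈ D, there exist finitely many indices d₀, …, d_k, each ≽ d, such that for every x ∈ [0,1] there is some j ≤ k with |f_{d_j}(x) − f(x)| < ε. -/
import Mathlib


open Filter Topology

/-- Arzelà's theorem for nets: a net of continuous functions on `[0,1]` converging
pointwise to a continuous function converges quasi-uniformly. -/
theorem arzela_quasi_uniform_for_nets
    (D : Type) [Preorder D] [Nonempty D] [IsDirected D (· ≤ ·)]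
    (f : D → C(Set.Icc (0 : ℝ) 1, ℝ)) (g : C(Set.Icc (0 : ℝ) 1, ℝ))
    (hptwise : ∀ t, Tendsto (fun d => f d t) atTop (𝓝 (g t))) :
    ∀ ε > (0 : ℝ), ∀ d : D, ∃ L : Finset D, L.Nonempty ∧ (∀ j ∈ L, d ≤ j) ∧
      ∀ t, ∃ j ∈ L, |f j t - g t| < ε := by
  classical
  intro ε hε d
  -- for each point x, choose an index dx x ≥ d with |f (dx x) x - g x| < ε
  have key : ∀ x : Set.Icc (0:ℝ) 1, ∃ e : D, d ≤ e ∧ |f e x - g x| < ε := by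
    intro x
    have h := (hptwise x).eventually (eventually_abs_sub_lt (g x) hε)
    rw [eventually_atTop] at h
    obtain ⟨a, ha⟩ := h
    obtain ⟨c, hc1, hc2⟩ := directed_of (· ≤ ·) d a
    exact ⟨c, hc1, ha c hc2⟩
  choose dx hdx hlt using key
  -- open neighborhoods
  set U : Set.Icc (0:ℝ) 1 → Set (Set.Icc (0:ℝ) 1) :=
    fun x => {y | |f (dx x) y - g y| < ε} with hU
  have hUopen : ∀ x, IsOpen (U x) := by
    intro x
    have : Continuous fun y : Set.Icc (0:ℝ) 1 => |f (dx x) y - g y| :=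
      ((f (dx x)).continuous.sub g.continuous).abs
    exact isOpen_lt this continuous_const
  have hUnhds : ∀ x ∈ (Set.univ : Set (Set.Icc (0:ℝ) 1)), U x ∈ 𝓝 x := by
    intro x _
    exact (hUopen x).mem_nhds (hlt x)
  obtain ⟨s, _, hs⟩ := isCompact_univ.elim_nhds_subcover U (hUnhds)
  refine ⟨s.image dx, ?_, ?_, ?_⟩
  · have h0 : (⟨0, by norm_num, by norm_num⟩ : Set.Icc (0:ℝ) 1) ∈
        ⋃ x ∈ s, U x := hs (Set.mem_univ _)
    simp only [Set.mem_iUnion] at h0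
    obtain ⟨x, hx, _⟩ := h0
    exact ⟨dx x, Finset.mem_image_of_mem _ hx⟩
  · intro j hj
    obtain ⟨x, _, rfl⟩ := Finset.mem_image.mp hj
    exact hdx x
  · intro t
    have ht : t ∈ ⋃ x ∈ s, U x := hs (Set.mem_univ _)
    simp only [Set.mem_iUnion] at ht
    obtain ⟨x, hx, hxt⟩ := ht
    exact ⟨dx x, Finset.mem_image_of_mem _ hx, hxt⟩
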